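/- arXiv:1805.00294 — 2 statements merged into one kernel-verified Lean document; each statement's English description precedes it below -/
import Mathlib

section
/- Let 1 ≤ k < n+1 be integers and let d be a divisor of (k,n). Then the number of sequences α ∈ X_n^k with α(0) = 0 and period P(α) = d equals the sum over all subsets B ⊆ PD_d of (-1)^{|B|} · C( (d/∏_{p∈B} p)·(n+2)/(k+1) − 1, (d/∏_{p∈B} p) − 1 ), where the empty product is 1. -/
/-! If `α 0 = 0` and `e` is a divisor of `(k,n)`, then `α` is `e`-additive exactly when it grows
by `e δ / (k + 1)` along every step of length `e`. Such sequences are determined by their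
monotone values at `1, …, e - 1`, which gives the binomial count `C(e(n+2)/(k+1) - 1, e - 1)`.
Additivity is closed under `gcd` (after a quasi-periodic extension it becomes periodicity), so `α`
is `e`-additive iff `P(α) ∣ e`. Hence `P(α) = d` iff `P(α) ∣ d` and `P(α) ∤ d/p` for all
`p ∈ PD_d`, while `P(α) ∣ d/p` for all `p ∈ B` iff `P(α) ∣ d/∏B`; inclusion–exclusion over
`B ⊆ PD_d` gives the formula. -/

/-- `α` represents an element of `X_n^k`: a weakly increasing sequence
`{0,…,k} → {0,…,n+1-k}` (normalized to vanish beyond `k`). -/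
def IsXseq (n k : ℕ) (α : ℕ → ℕ) : Prop :=
  (∀ i j : ℕ, i ≤ j → j ≤ k → α i ≤ α j) ∧ α k ≤ n + 1 - k ∧ ∀ i : ℕ, k < i → α i = 0

/-- `d` is a divisor of `(k,n)`: `1 ≤ d ≤ k+1`, `d ∣ k+1` and `d(n+2)/(k+1) ∈ ℤ`. -/
def IsDivOf (n k d : ℕ) : Prop :=
  1 ≤ d ∧ d ≤ k + 1 ∧ d ∣ (k + 1) ∧ (k + 1) ∣ d * (n + 2)

/-- `α` is a `d`-additive sequence: for `d < k+1`, `α d = d·δ/(k+1)` (with `δ = n+1-k`)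
and `α (j + i·d) = α j + i·α d` whenever `j + i·d ≤ k`; for `d = k+1`, just `α 0 = 0`. -/
def IsDAdd (n k d : ℕ) (α : ℕ → ℕ) : Prop :=
  if d = k + 1 then α 0 = 0
  else (k + 1) * α d = d * (n + 1 - k) ∧
    ∀ i j : ℕ, j + i * d ≤ k → α (j + i * d) = α j + i * α d

/-- The period of `α`: the minimal divisor `d` of `(k,n)` such that `α` is `d`-additive. -/
noncomputable def period (n k : ℕ) (α : ℕ → ℕ) : ℕ :=
  sInf {d : ℕ | IsDivOf n k d ∧ IsDAdd n k d α}

open scoped Classical in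
/-- `PD_d` as a finset: the primes `p` with `p ∣ d` and `d/p` a divisor of `(k,n)`. -/
noncomputable def PDfinset (n k d : ℕ) : Finset ℕ :=
  (Finset.range (d + 1)).filter (fun p => p.Prime ∧ p ∣ d ∧ IsDivOf n k (d / p))


open Finset Function

theorem Function.Periodic.nat_gcd {β : Type*} {f : ℕ → β} {a b : ℕ} (ha : Periodic f a)
    (hb : Periodic f b) : Periodic f (a.gcd b) := by
  rcases Nat.eq_zero_or_pos b with rfl | hb0
  · simpa using ha
  rcases (Nat.gcd_le_right a hb0).lt_or_eq with hlt | heq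
  · obtain ⟨m, -, hm⟩ := Nat.exists_mul_mod_eq_gcd hlt
    intro x
    calc f (x + a.gcd b) = f (x + a.gcd b + a * m / b * b) := (hb.nat_mul _ _).symm
      _ = f (x + m * a) := by rw [add_assoc, ← hm, Nat.mod_add_div', mul_comm]
      _ = f x := ha.nat_mul m x
  · rwa [heq]

theorem Nat.dvd_div_prod_primes_iff {a d : ℕ} {B : Finset ℕ} (hprime : ∀ p ∈ B, p.Prime)
    (hdvd : ∀ p ∈ B, p ∣ d) (had : a ∣ d) :
    a ∣ d / ∏ p ∈ B, p ↔ ∀ p ∈ B, a ∣ d / p := by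
  have hBd : ∏ p ∈ B, p ∣ d := prod_primes_dvd d (fun p hp => (hprime p hp).prime) hdvd
  have key : ∀ q, q ∣ d → (a ∣ d / q ↔ q ∣ d / a) := fun q hq => by
    rw [Nat.dvd_div_iff_mul_dvd hq, mul_comm, Nat.dvd_div_iff_mul_dvd had]
  rw [key _ hBd]
  refine ⟨fun h p hp => (key p (hdvd p hp)).2 ((dvd_prod_of_mem _ hp).trans h), fun h => ?_⟩
  exact prod_primes_dvd _ (fun p hp => (hprime p hp).prime)
    fun p hp => (key p (hdvd p hp)).1 (h p hp)

theorem Finset.inclusion_exclusion_card_filter_forall_not {ι α : Type*} [DecidableEq ι]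
    (F : Finset α) (s : Finset ι) (Q : ι → α → Prop) [∀ i, DecidablePred (Q i)] :
    (#(F.filter fun a => ∀ i ∈ s, ¬ Q i a) : ℤ) =
      ∑ t ∈ s.powerset, (-1 : ℤ) ^ #t * #(F.filter fun a => ∀ i ∈ t, Q i a) := by
  simp only [card_filter, Nat.cast_sum, Nat.cast_ite, Nat.cast_one, Nat.cast_zero, mul_sum]
  rw [sum_comm]
  refine sum_congr rfl fun a _ => ?_
  have hsubsets : s.powerset.filter (fun t => ∀ i ∈ t, Q i a) = (s.filter (Q · a)).powerset := by
    ext t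
    simp only [mem_filter, mem_powerset, subset_iff]
    grind
  simp only [mul_ite, mul_one, mul_zero, ← sum_filter, hsubsets, sum_powerset_neg_one_pow_card,
    filter_eq_empty_iff]

theorem Set.Finite.natCard_subtype_and {α : Type*} {p q : α → Prop} (hp : {a | p a}.Finite)
    [DecidablePred q] : Nat.card {a // p a ∧ q a} = #(hp.toFinset.filter q) := by
  rw [← Nat.card_eq_finsetCard]
  exact Nat.card_congr (Equiv.subtypeEquivRight fun a => by simp)

noncomputable def Fin.monotoneEquivSym (α : Type*) [LinearOrder α] (t : ℕ) :
    {f : Fin t → α // Monotone f} ≃ Sym α t where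
  toFun f := ⟨List.ofFn f.1, by simp⟩
  invFun s := ⟨fun i => (s.1.sort (· ≤ ·)).get (i.cast (by simp)),
    fun _ _ hij => Multiset.pairwise_sort s.1 (· ≤ ·) |>.sortedLE.monotone_get hij⟩
  left_inv f := by
    ext i
    simp [Multiset.coe_sort, List.mergeSort_eq_self _ f.2.sortedLE_ofFn.pairwise]
    rfl
  right_inv s := by
    ext1
    conv_rhs => rw [← Multiset.sort_eq (s : Multiset α) (· ≤ ·)]
    exact congrArg _ (List.ext_getElem (by simp) fun _ _ _ => by simp; rfl)

theorem Fin.natCard_monotone (m t : ℕ) :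
    Nat.card {f : Fin t → Fin (m + 1) // Monotone f} = (m + t).choose t := by
  rw [Nat.card_congr (Fin.monotoneEquivSym _ t), Sym.natCard_sym_eq_choose,
    Nat.card_eq_fintype_card, Fintype.card_fin, Nat.add_right_comm, Nat.add_sub_cancel]

section
variable {n k : ℕ}

theorem isDivOf_succ : IsDivOf n k (k + 1) :=
  ⟨by omega, le_rfl, dvd_rfl, dvd_mul_right _ _⟩

theorem IsDivOf.pos {e : ℕ} (he : IsDivOf n k e) : 0 < e := he.1

theorem IsDivOf.gcd {e f : ℕ} (he : IsDivOf n k e) (hf : IsDivOf n k f) :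
    IsDivOf n k (e.gcd f) := by
  have hdvd : e.gcd f ∣ k + 1 := (Nat.gcd_dvd_left e f).trans he.2.2.1
  refine ⟨Nat.gcd_pos_of_pos_left f he.pos, Nat.le_of_dvd k.succ_pos hdvd, hdvd, ?_⟩
  rw [← Nat.gcd_mul_right]
  exact Nat.dvd_gcd he.2.2.2 hf.2.2.2

theorem IsDivOf.of_dvd {e f : ℕ} (he : IsDivOf n k e) (hef : e ∣ f) (hf : f ∣ k + 1) :
    IsDivOf n k f :=
  ⟨Nat.pos_of_dvd_of_pos hf k.succ_pos,
    Nat.le_of_dvd k.succ_pos hf, hf, he.2.2.2.trans (mul_dvd_mul_right hef _)⟩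

theorem mem_PDfinset {d p : ℕ} (hd : 0 < d) :
    p ∈ PDfinset n k d ↔ p.Prime ∧ p ∣ d ∧ IsDivOf n k (d / p) := by
  simp only [PDfinset, mem_filter, mem_range, and_iff_right_iff_imp]
  exact fun h => Nat.lt_succ_of_le (Nat.le_of_dvd hd h.2.1)

theorem prod_dvd_of_subset_PDfinset {d : ℕ} (hd : 0 < d) {B : Finset ℕ}
    (hB : B ⊆ PDfinset n k d) : ∏ p ∈ B, p ∣ d :=
  prod_primes_dvd d (fun _ hp => ((mem_PDfinset hd).1 (hB hp)).1.prime)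
    fun _ hp => ((mem_PDfinset hd).1 (hB hp)).2.1

theorem dvd_div_prod_iff_of_subset_PDfinset {a d : ℕ} (hd : 0 < d) {B : Finset ℕ}
    (hB : B ⊆ PDfinset n k d) : a ∣ d / ∏ p ∈ B, p ↔ a ∣ d ∧ ∀ p ∈ B, a ∣ d / p := by
  have hmem : ∀ p ∈ B, p.Prime ∧ p ∣ d ∧ IsDivOf n k (d / p) :=
    fun p hp => (mem_PDfinset hd).1 (hB hp)
  have hiff := fun had : a ∣ d =>
    Nat.dvd_div_prod_primes_iff (fun p hp => (hmem p hp).1) (fun p hp => (hmem p hp).2.1) had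
  refine ⟨fun h => ?_, fun h => (hiff h.1).2 h.2⟩
  have had := h.trans (Nat.div_dvd_of_dvd (prod_dvd_of_subset_PDfinset hd hB))
  exact ⟨had, (hiff had).1 h⟩

theorem IsDivOf.div_prod {d : ℕ} (hd : IsDivOf n k d) {B : Finset ℕ}
    (hB : B ⊆ PDfinset n k d) : IsDivOf n k (d / ∏ p ∈ B, p) := by
  have hmem : ∀ p ∈ B, p.Prime ∧ p ∣ d ∧ IsDivOf n k (d / p) :=
    fun p hp => (mem_PDfinset hd.pos).1 (hB hp)
  have hBd := prod_dvd_of_subset_PDfinset hd.pos hB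
  have hdvd : d / ∏ p ∈ B, p ∣ k + 1 := (Nat.div_dvd_of_dvd hBd).trans hd.2.2.1
  refine ⟨Nat.div_pos (Nat.le_of_dvd hd.pos hBd) (Nat.pos_of_dvd_of_pos hBd hd.pos),
    Nat.le_of_dvd k.succ_pos hdvd, hdvd, ?_⟩
  rw [Nat.div_mul_right_comm hBd, Nat.dvd_div_prod_primes_iff (fun p hp => (hmem p hp).1)
    (fun p hp => (hmem p hp).2.1.mul_right _) hd.2.2.2]
  intro p hp
  rw [← Nat.div_mul_right_comm (hmem p hp).2.1]
  exact (hmem p hp).2.2.2.2.2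

def StepAdditive (k e v : ℕ) (α : ℕ → ℕ) : Prop :=
  ∀ j, j + e ≤ k → α (j + e) = α j + v

theorem StepAdditive.add_mul {e v : ℕ} {α : ℕ → ℕ} (h : StepAdditive k e v α) (c j : ℕ)
    (hj : j + c * e ≤ k) : α (j + c * e) = α j + c * v := by
  induction c with
  | zero => simp
  | succ c ih =>
    rw [Nat.succ_mul, ← add_assoc, h _ (by rwa [add_assoc, ← Nat.succ_mul]),
      ih (by rw [Nat.succ_mul] at hj; omega), Nat.succ_mul, add_assoc]

theorem StepAdditive.mul {e v : ℕ} {α : ℕ → ℕ} (h : StepAdditive k e v α) (c : ℕ) :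
    StepAdditive k (c * e) (c * v) α :=
  h.add_mul c

def additiveIncrement (n k e : ℕ) : ℕ := e * (n + 1 - k) / (k + 1)

theorem IsDivOf.succ_dvd_mul {e : ℕ} (he : IsDivOf n k e) : k + 1 ∣ e * (n + 1 - k) := by
  rcases le_or_gt k (n + 1) with hkn | hkn
  · have h := he.2.2.2
    rwa [show n + 2 = (k + 1) + (n + 1 - k) by omega, mul_add,
      Nat.dvd_add_right (dvd_mul_left _ _)] at h
  · simp [Nat.sub_eq_zero_of_le hkn.le]

theorem IsDivOf.succ_mul_additiveIncrement {e : ℕ} (he : IsDivOf n k e) :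
    (k + 1) * additiveIncrement n k e = e * (n + 1 - k) :=
  Nat.mul_div_cancel' he.succ_dvd_mul

theorem IsDivOf.additiveIncrement_mul {e : ℕ} (he : IsDivOf n k e) (c : ℕ) :
    additiveIncrement n k (c * e) = c * additiveIncrement n k e := by
  rw [additiveIncrement, additiveIncrement, mul_assoc, Nat.mul_div_assoc _ he.succ_dvd_mul]

theorem isDAdd_iff_stepAdditive {e : ℕ} (he : IsDivOf n k e) {α : ℕ → ℕ} (h0 : α 0 = 0) :
    IsDAdd n k e α ↔ StepAdditive k e (additiveIncrement n k e) α := by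
  by_cases hek : e = k + 1
  · simp only [IsDAdd, hek, if_true, h0, true_iff]
    intro j hj
    omega
  rw [IsDAdd, if_neg hek]
  replace hek : e ≤ k := by have := he.2.1; omega
  constructor
  · rintro ⟨hv, hadd⟩ j hj
    have hαe : α e = additiveIncrement n k e :=
      Nat.eq_of_mul_eq_mul_left k.succ_pos (hv.trans he.succ_mul_additiveIncrement.symm)
    simpa [hαe] using hadd 1 j (by simpa using hj)
  · intro h
    have hαe : α e = additiveIncrement n k e := by simpa [h0] using h 0 (by simpa using hek)
    refine ⟨by rw [hαe, he.succ_mul_additiveIncrement], fun i j hij => ?_⟩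
    rw [hαe]
    exact h.add_mul i j hij

/-- `(k + 1) α̃ j - j δ` for the extension `α̃ (j + (k + 1)) = α̃ j + δ` of `α` past `k`.
For `e ∣ k + 1` it is `e`-periodic iff `α` is stepwise additive with step `e` and increment
`e δ / (k + 1)`. -/
def wrapDefect (n k : ℕ) (α : ℕ → ℕ) (j : ℕ) : ℤ :=
  (k + 1 : ℤ) * α (j % (k + 1)) - (j % (k + 1) : ℕ) * (n + 1 - k : ℕ)

theorem StepAdditive.periodic_wrapDefect {e v : ℕ} {α : ℕ → ℕ} (h : StepAdditive k e v α)
    (he : e ∣ k + 1) (hv : (k + 1) * v = e * (n + 1 - k)) :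
    Periodic (wrapDefect n k α) e := by
  obtain ⟨_ | b, hb⟩ := he
  · simp at hb
  have hv' : ((k + 1 : ℕ) : ℤ) * v = e * (n + 1 - k : ℕ) := by exact_mod_cast hv
  intro j
  set r := j % (k + 1) with hr
  have hrk : r < k + 1 := Nat.mod_lt _ k.succ_pos
  have hmod : (j + e) % (k + 1) = (r + e) % (k + 1) := by rw [hr, Nat.mod_add_mod]
  rcases lt_or_ge (r + e) (k + 1) with hlt | hge
  · rw [wrapDefect, wrapDefect, hmod, Nat.mod_eq_of_lt hlt, ← hr, h r (by omega)]
    push_cast at hv' ⊢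
    linear_combination hv'
  · obtain ⟨j₀, hj₀⟩ : ∃ j₀, r + e = (k + 1) + j₀ := ⟨r + e - (k + 1), by omega⟩
    have hr₀ : r = j₀ + b * e := by rw [mul_add, mul_one] at hb; rw [mul_comm]; omega
    rw [wrapDefect, wrapDefect, hmod, hj₀, Nat.add_mod_left, Nat.mod_eq_of_lt (by omega), ← hr]
    have hα : (α r : ℤ) = α j₀ + b * v := by
      rw [hr₀]; exact_mod_cast h.add_mul b j₀ (by omega)
    have hr₀' : (r : ℤ) = j₀ + b * e := by exact_mod_cast hr₀
    push_cast at hv' ⊢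
    linear_combination -(k + 1 : ℤ) * hα + ((n + 1 - k : ℕ) : ℤ) * hr₀' - (b : ℤ) * hv'

theorem StepAdditive.of_periodic_wrapDefect {e v : ℕ} {α : ℕ → ℕ}
    (hv : (k + 1) * v = e * (n + 1 - k)) (h : Periodic (wrapDefect n k α) e) :
    StepAdditive k e v α := by
  intro j hj
  have hj' := h j
  rw [wrapDefect, wrapDefect, Nat.mod_eq_of_lt (by omega), Nat.mod_eq_of_lt (by omega)] at hj'
  have hv' : ((k + 1 : ℕ) : ℤ) * v = e * (n + 1 - k : ℕ) := by exact_mod_cast hv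
  have key : ((k + 1 : ℕ) : ℤ) * α (j + e) = ((k + 1 : ℕ) : ℤ) * (α j + v) := by
    push_cast at hv' hj' ⊢
    linear_combination hj' - hv'
  exact_mod_cast mul_left_cancel₀ (by positivity) key

theorem IsDAdd.of_dvd {e f : ℕ} {α : ℕ → ℕ} (h : IsDAdd n k e α) (he : IsDivOf n k e)
    (hf : IsDivOf n k f) (hef : e ∣ f) (h0 : α 0 = 0) : IsDAdd n k f α := by
  obtain ⟨c, rfl⟩ := hef
  rw [isDAdd_iff_stepAdditive he h0] at h
  rw [isDAdd_iff_stepAdditive hf h0, mul_comm, he.additiveIncrement_mul]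
  exact h.mul c

theorem IsDAdd.gcd {e f : ℕ} {α : ℕ → ℕ} (hαe : IsDAdd n k e α) (hαf : IsDAdd n k f α)
    (he : IsDivOf n k e) (hf : IsDivOf n k f) (h0 : α 0 = 0) : IsDAdd n k (e.gcd f) α := by
  rw [isDAdd_iff_stepAdditive he h0] at hαe
  rw [isDAdd_iff_stepAdditive hf h0] at hαf
  rw [isDAdd_iff_stepAdditive (he.gcd hf) h0]
  exact .of_periodic_wrapDefect (he.gcd hf).succ_mul_additiveIncrement <|
    (hαe.periodic_wrapDefect he.2.2.1 he.succ_mul_additiveIncrement).nat_gcd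
      (hαf.periodic_wrapDefect hf.2.2.1 hf.succ_mul_additiveIncrement)

theorem isDivOf_period_and_isDAdd {α : ℕ → ℕ} (h0 : α 0 = 0) :
    IsDivOf n k (period n k α) ∧ IsDAdd n k (period n k α) α :=
  Nat.sInf_mem (s := {d | IsDivOf n k d ∧ IsDAdd n k d α})
    ⟨k + 1, isDivOf_succ, by simp [IsDAdd, h0]⟩

theorem isDAdd_iff_period_dvd {e : ℕ} (he : IsDivOf n k e) {α : ℕ → ℕ} (h0 : α 0 = 0) :
    IsDAdd n k e α ↔ period n k α ∣ e := by
  obtain ⟨hP, hPα⟩ := isDivOf_period_and_isDAdd h0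
  refine ⟨fun h => ?_, fun h => hPα.of_dvd hP he h h0⟩
  have hle : period n k α ≤ (period n k α).gcd e :=
    Nat.sInf_le ⟨hP.gcd he, hPα.gcd h hP he h0⟩
  rw [← Nat.gcd_eq_left_iff_dvd]
  exact le_antisymm (Nat.gcd_le_left e hP.pos) hle

theorem IsDivOf.eq_iff_dvd_and_forall_not_dvd_div {e d : ℕ} (he : IsDivOf n k e)
    (hd : IsDivOf n k d) : e = d ↔ e ∣ d ∧ ∀ p ∈ PDfinset n k d, ¬ e ∣ d / p := by
  constructor
  · rintro rfl
    refine ⟨dvd_rfl, fun p hp hdvd => ?_⟩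
    obtain ⟨hp, -, hep⟩ := (mem_PDfinset he.pos).1 hp
    exact (Nat.div_lt_self he.pos hp.one_lt).not_ge (Nat.le_of_dvd hep.pos hdvd)
  · rintro ⟨⟨t, rfl⟩, hnot⟩
    by_contra hne
    have hpt : t.minFac ∣ t := Nat.minFac_dvd t
    have hpd : t.minFac ∣ e * t := hpt.mul_left e
    have hediv : e ∣ e * t / t.minFac := by
      rw [Nat.mul_div_assoc _ hpt]
      exact dvd_mul_right _ _
    refine hnot t.minFac ((mem_PDfinset hd.pos).2 ⟨Nat.minFac_prime ?_, hpd, ?_⟩) hediv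
    · rintro rfl
      exact hne (mul_one e).symm
    · exact he.of_dvd hediv ((Nat.div_dvd_of_dvd hpd).trans hd.2.2.1)

theorem IsXseq.le_of_stepAdditive {e v j : ℕ} {α : ℕ → ℕ} (hX : IsXseq n k α)
    (h : StepAdditive k e v α) (he : e ∣ k + 1) (hv : (k + 1) * v = e * (n + 1 - k))
    (hj : j < e) : α j ≤ v := by
  obtain ⟨_ | b, hb⟩ := he
  · simp at hb
  have hbv : (b + 1) * v = n + 1 - k :=
    Nat.eq_of_mul_eq_mul_left (by omega : 0 < e) (by rw [← mul_assoc, ← hb, hv])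
  rw [mul_add, mul_one] at hb
  have hjk : j + b * e ≤ k := by rw [mul_comm]; omega
  have hle := (hX.1 _ k hjk le_rfl).trans hX.2.1
  rw [h.add_mul b j hjk, ← hbv, add_one_mul] at hle
  omega

def blockInit {e v : ℕ} (f : Fin (e - 1) → Fin (v + 1)) (r : ℕ) : ℕ :=
  if h : 0 < r ∧ r < e then f ⟨r - 1, by omega⟩ else 0

def blockSeq (k e v : ℕ) (f : Fin (e - 1) → Fin (v + 1)) (j : ℕ) : ℕ :=
  if j ≤ k then j / e * v + blockInit f (j % e) else 0

section blockSeq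

variable {e v : ℕ} {f : Fin (e - 1) → Fin (v + 1)}

theorem blockInit_zero : blockInit f 0 = 0 := by simp [blockInit]

theorem blockInit_le (r : ℕ) : blockInit f r ≤ v := by
  unfold blockInit
  split
  · exact Nat.lt_succ_iff.1 (f _).2
  · exact Nat.zero_le v

theorem blockInit_add_one {i : ℕ} (hi : i + 1 < e) : blockInit f (i + 1) = f ⟨i, by omega⟩ := by
  simp [blockInit, hi]

theorem blockInit_mono (hf : Monotone f) {r r' : ℕ} (hrr' : r ≤ r') (hr' : r' < e) :
    blockInit f r ≤ blockInit f r' := by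
  rcases Nat.eq_zero_or_pos r with rfl | hr
  · exact blockInit_zero.trans_le (Nat.zero_le _)
  · rw [blockInit, dif_pos ⟨hr, by omega⟩, blockInit, dif_pos ⟨by omega, hr'⟩]
    exact hf (Fin.mk_le_mk.2 (by omega))

theorem blockSeq_zero : blockSeq k e v f 0 = 0 := by simp [blockSeq, blockInit_zero]

theorem stepAdditive_blockSeq (he : 0 < e) : StepAdditive k e v (blockSeq k e v f) := by
  intro j hj
  rw [blockSeq, if_pos hj, blockSeq, if_pos (by omega), Nat.add_div_right _ he,
    Nat.add_mod_right, add_one_mul]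
  ring

theorem isXseq_blockSeq (hf : Monotone f) (he : e ∣ k + 1) (hv : (k + 1) * v = e * (n + 1 - k)) :
    IsXseq n k (blockSeq k e v f) := by
  have he0 : 0 < e := Nat.pos_of_dvd_of_pos he k.succ_pos
  refine ⟨fun i j hij hjk => ?_, ?_, fun i hi => if_neg (by omega)⟩
  · rw [blockSeq, if_pos (hij.trans hjk), blockSeq, if_pos hjk]
    rcases (Nat.div_le_div_right hij : i / e ≤ j / e).lt_or_eq with hlt | heq
    · calc i / e * v + blockInit f (i % e) ≤ (i / e + 1) * v := by
            rw [add_one_mul]; exact Nat.add_le_add_left (blockInit_le _) _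
        _ ≤ j / e * v := Nat.mul_le_mul_right _ hlt
        _ ≤ _ := Nat.le_add_right _ _
    · have hi := Nat.div_add_mod i e
      have hj := Nat.div_add_mod j e
      rw [heq] at hi ⊢
      exact Nat.add_le_add_left (blockInit_mono hf (by omega) (Nat.mod_lt j he0)) _
  · have hq : (k / e + 1) * v = n + 1 - k := by
      refine Nat.eq_of_mul_eq_mul_left he0 ?_
      rw [← mul_assoc, mul_comm e, ← Nat.succ_div_of_dvd he, Nat.div_mul_cancel he, hv]
    rw [blockSeq, if_pos le_rfl, ← hq, add_one_mul]
    exact Nat.add_le_add_left (blockInit_le _) _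

end blockSeq

def stepAdditiveEquiv {e v : ℕ} (he : e ∣ k + 1) (hv : (k + 1) * v = e * (n + 1 - k)) :
    {α : ℕ → ℕ // IsXseq n k α ∧ α 0 = 0 ∧ StepAdditive k e v α} ≃
      {f : Fin (e - 1) → Fin (v + 1) // Monotone f} where
  toFun α := ⟨fun i => ⟨α.1 (i + 1),
      Nat.lt_succ_of_le (α.2.1.le_of_stepAdditive α.2.2.2 he hv (by omega))⟩,
    fun i j hij => α.2.1.1 _ _ (by simpa using hij)
      (by have := Nat.le_of_dvd k.succ_pos he; omega)⟩
  invFun f := ⟨blockSeq k e v f.1, isXseq_blockSeq f.2 he hv, blockSeq_zero,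
    stepAdditive_blockSeq (Nat.pos_of_dvd_of_pos he k.succ_pos)⟩
  left_inv α := by
    obtain ⟨α, hX, h0, h⟩ := α
    ext j
    simp only [blockSeq]
    split_ifs with hjk
    · have he0 : 0 < e := Nat.pos_of_dvd_of_pos he k.succ_pos
      have hj : α j = α (j % e) + j / e * v := by
        conv_lhs => rw [← Nat.mod_add_div' j e]
        exact h.add_mul _ _ (by rwa [Nat.mod_add_div'])
      rw [hj, add_comm]
      congr 1
      rcases Nat.eq_zero_or_pos (j % e) with hr | hr
      · rw [hr, blockInit_zero, h0]
      · obtain ⟨i, hi⟩ : ∃ i, j % e = i + 1 := ⟨j % e - 1, by omega⟩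
        rw [hi, blockInit_add_one (hi ▸ Nat.mod_lt j he0)]
    · exact (hX.2.2 j (by omega)).symm
  right_inv f := by
    ext i
    have hi : (i : ℕ) + 1 < e := by have := i.2; omega
    have hik : (i : ℕ) + 1 ≤ k := by have := Nat.le_of_dvd k.succ_pos he; omega
    simp only [blockSeq, if_pos hik, Nat.div_eq_of_lt hi, Nat.mod_eq_of_lt hi, zero_mul, zero_add,
      blockInit_add_one hi]

theorem card_isDAdd {e : ℕ} (he : IsDivOf n k e) :
    Nat.card {α : ℕ → ℕ // IsXseq n k α ∧ α 0 = 0 ∧ IsDAdd n k e α} =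
      (additiveIncrement n k e + (e - 1)).choose (e - 1) := by
  rw [← Fin.natCard_monotone]
  exact Nat.card_congr <| (Equiv.subtypeEquivRight fun α => and_congr_right' <|
    and_congr_right fun h0 => isDAdd_iff_stepAdditive he h0).trans
      (stepAdditiveEquiv he.2.2.1 he.succ_mul_additiveIncrement)

theorem IsDivOf.mul_div_succ_sub_one {e : ℕ} (hkn : k < n + 1) (he : IsDivOf n k e) :
    e * (n + 2) / (k + 1) - 1 = additiveIncrement n k e + (e - 1) := by
  have h : e * (n + 2) = (k + 1) * (e + additiveIncrement n k e) := by
    rw [show n + 2 = (k + 1) + (n + 1 - k) by omega, mul_add (k + 1), he.succ_mul_additiveIncrement]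
    ring
  rw [h, Nat.mul_div_cancel_left _ k.succ_pos]
  have := he.pos
  omega

end

theorem finite_setOf_isXseq (n k : ℕ) : {α | IsXseq n k α}.Finite := by
  refine (Set.finite_range fun (f : Fin (k + 1) → Fin (n + 2)) j =>
    if h : j < k + 1 then (f ⟨j, h⟩ : ℕ) else 0).subset fun α hα => ?_
  refine ⟨fun i => ⟨α i, ?_⟩, funext fun j => ?_⟩
  · have := (hα.1 i k (by omega) le_rfl).trans hα.2.1
    omega
  · dsimp only
    split_ifs with hj
    · rfl
    · exact (hα.2.2 j (by omega)).symm

theorem stmt10_general (n k d : ℕ) (hkn : k < n + 1) (hd : IsDivOf n k d) :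
    (Nat.card {α : ℕ → ℕ // IsXseq n k α ∧ α 0 = 0 ∧ period n k α = d} : ℤ) =
      ∑ B ∈ (PDfinset n k d).powerset,
        (-1 : ℤ) ^ B.card *
          (Nat.choose ((d / ∏ p ∈ B, p) * (n + 2) / (k + 1) - 1)
            ((d / ∏ p ∈ B, p) - 1) : ℤ) := by
  classical
  have hX := finite_setOf_isXseq n k
  set X := hX.toFinset
  have hperiod : X.filter (fun α => α 0 = 0 ∧ period n k α = d) =
      (X.filter fun α => α 0 = 0 ∧ period n k α ∣ d).filter
        fun α => ∀ p ∈ PDfinset n k d, ¬ period n k α ∣ d / p := by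
    rw [filter_filter]
    refine filter_congr fun α _ => ?_
    rw [and_assoc]
    exact and_congr_right fun h0 =>
      (isDivOf_period_and_isDAdd h0).1.eq_iff_dvd_and_forall_not_dvd_div hd
  rw [hX.natCard_subtype_and, hperiod, inclusion_exclusion_card_filter_forall_not]
  refine sum_congr rfl fun B hB => ?_
  have hBsub := mem_powerset.1 hB
  have hdB := hd.div_prod hBsub
  have hfilter : (X.filter fun α => α 0 = 0 ∧ period n k α ∣ d).filter
      (fun α => ∀ p ∈ B, period n k α ∣ d / p) =
        X.filter fun α => α 0 = 0 ∧ IsDAdd n k (d / ∏ p ∈ B, p) α := by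
    rw [filter_filter]
    refine filter_congr fun α _ => ?_
    rw [and_assoc]
    exact and_congr_right fun h0 => by
      rw [isDAdd_iff_period_dvd hdB h0, dvd_div_prod_iff_of_subset_PDfinset hd.pos hBsub]
  rw [hfilter, ← hX.natCard_subtype_and, card_isDAdd hdB, hdB.mul_div_succ_sub_one hkn]

/-- For a divisor `d` of `(k,n)`, the number of `α ∈ X_n^k` with `α 0 = 0` and period `d`
equals `∑_{B ⊆ PD_d} (-1)^{|B|} C((d/∏_{p∈B}p)·(n+2)/(k+1) − 1, (d/∏_{p∈B}p) − 1)`. -/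
theorem stmt10 (n k d : ℕ) (hk : 1 ≤ k) (hkn : k < n + 1) (hd : IsDivOf n k d) :
    (Nat.card {α : ℕ → ℕ // IsXseq n k α ∧ α 0 = 0 ∧ period n k α = d} : ℤ) =
      ∑ B ∈ (PDfinset n k d).powerset,
        (-1 : ℤ) ^ B.card *
          (Nat.choose ((d / ∏ p ∈ B, p) * (n + 2) / (k + 1) - 1)
            ((d / ∏ p ∈ B, p) - 1) : ℤ) :=
  stmt10_general n k d hkn hd
end

section
/- Let 1 ≤ k < n+1 be integers with gcd(n+2, k+1) = p a prime. Then the number of orbits of the rotation action of ℤ/(n+2) on (k+1)-element subsets of ℤ/(n+2) equals (1/(k+1))·C(n+1, k) + ((p−1)/(k+1))·C((n+2)/p − 1, (k+1)/p − 1). -/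
/-!
By Burnside's lemma, `numOrbits m r * m` is the sum over `g ∈ ℤ/m` of the number of `r`-subsets
fixed by translation by `g`. Such a subset is a union of cosets of `⟨g⟩`, so when `g` has order `d`
there are `C(m/d, r/d)` of them if `d ∣ r` and none otherwise. Since `ℤ/m` has `φ d` elements of
order `d` for each `d ∣ m`, this gives `numOrbits m r * m = ∑_{d ∣ gcd(m, r)} φ d * C(m/d, r/d)`.
When the gcd is a prime `p` only `d = 1` and `d = p` contribute, and
`m * C(m/p - 1, r/p - 1) = r * C(m/p, r/p)` turns this into the stated formula.
-/

/-- The number of orbits of the rotation (translation) action of `ℤ/m` on the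
set of `r`-element subsets of `ℤ/m`. -/
noncomputable def numOrbits (m r : ℕ) : ℕ :=
  Nat.card (Quot (fun s t : {s : Finset (ZMod m) // s.card = r} =>
    ∃ g : ZMod m, s.1.image (fun x => x + g) = t.1))

open Finset Pointwise AddAction

namespace QuotientAddGroup

variable {G : Type*} [AddCommGroup G] [Fintype G] {H : AddSubgroup G} [DecidableEq (G ⧸ H)]

theorem filter_mk_mem_image_mk {s : Finset G} (hs : ∀ h ∈ H, ∀ x ∈ s, h + x ∈ s) :
    ({x | (x : G ⧸ H) ∈ s.image (↑)} : Finset G) = s := by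
  ext x
  simp only [mem_filter, mem_univ, true_and, mem_image]
  refine ⟨fun ⟨y, hy, hyx⟩ => ?_, fun hx => ⟨x, hx, rfl⟩⟩
  simpa using hs _ (QuotientAddGroup.eq.1 hyx) y hy

theorem image_mk_filter_mk_mem (t : Finset (G ⧸ H)) :
    ({x | (x : G ⧸ H) ∈ t} : Finset G).image (↑) = t := by
  ext q
  induction q using QuotientAddGroup.induction_on
  simpa using ⟨fun ⟨a, ha, h⟩ => h ▸ ha, fun h => ⟨_, h, rfl⟩⟩

theorem vadd_filter_mk_mem [DecidableEq G] {g : G} (hg : g ∈ H) (t : Finset (G ⧸ H)) :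
    g +ᵥ ({x | (x : G ⧸ H) ∈ t} : Finset G) = ({x | (x : G ⧸ H) ∈ t} : Finset G) := by
  have hg : (g : G ⧸ H) = 0 := (eq_zero_iff g).2 hg
  ext x
  rw [mem_vadd_finset]
  constructor
  · rintro ⟨y, hy, rfl⟩
    simpa [vadd_eq_add, hg] using hy
  · intro hx
    exact ⟨-g + x, by simpa [hg] using hx, by simp⟩

theorem card_filter_mk_mem (t : Finset (G ⧸ H)) :
    #{x : G | (x : G ⧸ H) ∈ t} = Nat.card H * #t := by
  have := Nat.card_congr (preimageMkEquivAddSubgroupProdSet H t)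
  rw [Nat.card_prod, Nat.card_coe_set_eq, Nat.card_coe_set_eq, Set.ncard_coe_finset] at this
  rw [← this, ← Set.ncard_coe_finset, coe_filter]
  simp [Set.preimage]

end QuotientAddGroup

theorem Finset.add_mem_of_vadd_finset_eq_self {G : Type*} [AddGroup G] [DecidableEq G] {g : G}
    {s : Finset G} (hs : g +ᵥ s = s) : ∀ h ∈ AddSubgroup.zmultiples g, ∀ x ∈ s, h + x ∈ s := by
  intro h hh x hx
  rw [← AddSubgroup.zmultiples_le.2 (mem_stabilizer_iff.2 hs) hh]
  exact vadd_mem_vadd_finset hx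

section FixedBy

open AddSubgroup QuotientAddGroup

variable {G : Type*} [AddCommGroup G] [Fintype G] [DecidableEq G]

noncomputable def fixedByPowersetCardEquiv (g : G) (r : ℕ) :
    fixedBy (Set.powersetCard G r) g ≃
      {t : Finset (G ⧸ zmultiples g) // addOrderOf g * #t = r} := by
  classical
  have hstable (s : fixedBy (Set.powersetCard G r) g) :
      ∀ h ∈ zmultiples g, ∀ x ∈ (s.1 : Finset G), h + x ∈ s.1 :=
    add_mem_of_vadd_finset_eq_self (congrArg Subtype.val s.2)
  exact
    { toFun s := ⟨(s.1 : Finset G).image (↑), by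
        rw [← Nat.card_zmultiples, ← card_filter_mk_mem, filter_mk_mem_image_mk (hstable s)]
        exact s.1.2⟩
      invFun t := ⟨⟨({x | (x : G ⧸ zmultiples g) ∈ t.1} : Finset G), by
          rw [Set.powersetCard.mem_iff, card_filter_mk_mem, Nat.card_zmultiples, t.2]⟩,
        Subtype.ext (vadd_filter_mk_mem (mem_zmultiples g) t.1)⟩
      left_inv s := Subtype.ext (Subtype.ext (filter_mk_mem_image_mk (hstable s)))
      right_inv t := Subtype.ext (image_mk_filter_mk_mem t.1) }

theorem card_fixedBy_powersetCard (g : G) (r : ℕ) :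
    Nat.card (fixedBy (Set.powersetCard G r) g) =
      if addOrderOf g ∣ r then (Nat.card G / addOrderOf g).choose (r / addOrderOf g) else 0 := by
  have hd := addOrderOf_pos g
  rw [Nat.card_congr (fixedByPowersetCardEquiv g r)]
  split_ifs with hdr
  · obtain ⟨r', rfl⟩ := hdr
    rw [Nat.mul_div_cancel_left _ hd, card_eq_card_quotient_mul_card_addSubgroup (zmultiples g),
      Nat.card_zmultiples, Nat.mul_div_cancel _ hd, ← Set.powersetCard.card]
    exact Nat.card_congr (Equiv.subtypeEquivRight fun t => by simp [Nat.mul_left_cancel_iff hd])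
  · exact Nat.card_eq_zero.2 (.inl ⟨fun ⟨_, ht⟩ => hdr ⟨_, ht.symm⟩⟩)

end FixedBy

theorem IsAddCyclic.sum_addOrderOf {G : Type*} [AddGroup G] [Fintype G] [IsAddCyclic G]
    {M : Type*} [AddCommMonoid M] (f : ℕ → M) :
    ∑ g : G, f (addOrderOf g) = ∑ d ∈ (Fintype.card G).divisors, d.totient • f d := by
  classical
  rw [← sum_fiberwise_of_maps_to (t := (Fintype.card G).divisors)
    fun g _ => Nat.mem_divisors.2 ⟨addOrderOf_dvd_card, Fintype.card_ne_zero⟩]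
  refine sum_congr rfl fun d hd => ?_
  rw [sum_congr rfl fun g hg => by rw [(mem_filter.1 hg).2], sum_const,
    IsAddCyclic.card_addOrderOf_eq_totient (Nat.dvd_of_mem_divisors hd)]

theorem Nat.filter_dvd_divisors {m : ℕ} (hm : m ≠ 0) (r : ℕ) :
    {d ∈ m.divisors | d ∣ r} = (m.gcd r).divisors := by
  ext d
  simp [Nat.dvd_gcd_iff, hm]

theorem numOrbits_eq_card_orbitRel_quotient (m r : ℕ) :
    numOrbits m r = Nat.card (orbitRel.Quotient (ZMod m) (Set.powersetCard (ZMod m) r)) := by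
  refine Nat.card_congr (Quot.congrRight fun (s t : Set.powersetCard (ZMod m) r) => ?_)
  rw [Setoid.comm', orbitRel_apply, mem_orbit_iff]
  simp [Subtype.ext_iff, vadd_finset_def, add_comm]

theorem numOrbits_mul_eq_sum_divisors_gcd (m r : ℕ) [NeZero m] :
    numOrbits m r * m = ∑ d ∈ (m.gcd r).divisors, d.totient * (m / d).choose (r / d) := by
  classical
  have burnside := sum_card_fixedBy_eq_card_orbits_mul_card_addGroup (ZMod m)
    (Set.powersetCard (ZMod m) r)
  simp only [← Nat.card_eq_fintype_card, card_fixedBy_powersetCard, Nat.card_zmod] at burnside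
  rw [numOrbits_eq_card_orbitRel_quotient, ← burnside, IsAddCyclic.sum_addOrderOf
    (f := fun d => if d ∣ r then (m / d).choose (r / d) else 0), ZMod.card,
    ← Nat.filter_dvd_divisors (NeZero.ne m), sum_filter]
  simp only [smul_eq_mul, mul_ite, mul_zero]

theorem Nat.mul_choose_pred_div {m r p : ℕ} (hpm : p ∣ m) (hpr : p ∣ r) (hm : 0 < m)
    (hr : 0 < r) : m * (m / p - 1).choose (r / p - 1) = (m / p).choose (r / p) * r := by
  obtain ⟨m', rfl⟩ := hpm
  obtain ⟨r', rfl⟩ := hpr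
  have hp : 0 < p := Nat.pos_of_mul_pos_right hm
  obtain ⟨a, rfl⟩ := Nat.exists_eq_add_one.2 (Nat.pos_of_mul_pos_left hm)
  obtain ⟨b, rfl⟩ := Nat.exists_eq_add_one.2 (Nat.pos_of_mul_pos_left hr)
  rw [Nat.mul_div_cancel_left _ hp, Nat.mul_div_cancel_left _ hp, Nat.add_sub_cancel,
    Nat.add_sub_cancel, mul_assoc, Nat.add_one_mul_choose_eq]
  ring

theorem stmt12_general (n k p : ℕ) (hp : p.Prime)
    (hgcd : Nat.gcd (n + 2) (k + 1) = p) :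
    numOrbits (n + 2) (k + 1) * (k + 1) =
      (n + 1).choose k + (p - 1) * ((n + 2) / p - 1).choose ((k + 1) / p - 1) := by
  have hpm : p ∣ n + 2 := hgcd ▸ Nat.gcd_dvd_left _ _
  have hpr : p ∣ k + 1 := hgcd ▸ Nat.gcd_dvd_right _ _
  have hcount := numOrbits_mul_eq_sum_divisors_gcd (n + 2) (k + 1)
  rw [hgcd, hp.divisors, sum_pair hp.one_lt.ne, Nat.totient_one, Nat.totient_prime hp,
    Nat.div_one, Nat.div_one, one_mul] at hcount
  refine Nat.eq_of_mul_eq_mul_left (by omega : 0 < n + 2) ?_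
  calc (n + 2) * (numOrbits (n + 2) (k + 1) * (k + 1))
      = (numOrbits (n + 2) (k + 1) * (n + 2)) * (k + 1) := by ring
    _ = (n + 2).choose (k + 1) * (k + 1)
          + (p - 1) * (((n + 2) / p).choose ((k + 1) / p) * (k + 1)) := by
        rw [hcount]; ring
    _ = (n + 2) * (n + 1).choose k
          + (p - 1) * ((n + 2) * ((n + 2) / p - 1).choose ((k + 1) / p - 1)) := by
        rw [Nat.add_one_mul_choose_eq, Nat.mul_choose_pred_div hpm hpr (by omega) (by omega)]
    _ = _ := by ring

/-- If `gcd(n+2, k+1) = p` is prime, the number of orbits of the rotation action of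
`ℤ/(n+2)` on `(k+1)`-element subsets equals
`(1/(k+1))·C(n+1,k) + ((p−1)/(k+1))·C((n+2)/p − 1, (k+1)/p − 1)`. -/
theorem stmt12 (n k p : ℕ) (hk : 1 ≤ k) (hkn : k < n + 1) (hp : p.Prime)
    (hgcd : Nat.gcd (n + 2) (k + 1) = p) :
    numOrbits (n + 2) (k + 1) * (k + 1) =
      (n + 1).choose k + (p - 1) * ((n + 2) / p - 1).choose ((k + 1) / p - 1) :=
  stmt12_general n k p hp hgcd
end
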